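/- Every C-pattern corresponding to a rank-3 real cluster-cyclic exchange matrix is sign-coherent: for every reduced sequence w and each i ∈ {1,2,3}, the i-th column c_i^w of the C-matrix C^w satisfies c_i^w ≥ 0 or c_i^w ≤ 0 componentwise. -/

import Mathlib

open Matrix

noncomputable section

abbrev Mat3 := Matrix (Fin 3) (Fin 3) ℝ

def pPart {n : ℕ} (A : Matrix (Fin n) (Fin n) ℝ) : Matrix (Fin n) (Fin n) ℝ :=
  Matrix.of fun i j => max (A i j) 0

def Jmat {n : ℕ} (k : Fin n) : Matrix (Fin n) (Fin n) ℝ :=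
  Matrix.diagonal fun i => if i = k then -1 else 1

/-- `A^{•k}`: keep only column `k`. -/
def colSel {n : ℕ} (k : Fin n) (A : Matrix (Fin n) (Fin n) ℝ) : Matrix (Fin n) (Fin n) ℝ :=
  Matrix.of fun i j => if j = k then A i j else 0

/-- `A^{k•}`: keep only row `k`. -/
def rowSel {n : ℕ} (k : Fin n) (A : Matrix (Fin n) (Fin n) ℝ) : Matrix (Fin n) (Fin n) ℝ :=
  Matrix.of fun i j => if i = k then A i j else 0

/-- Matrix mutation in direction `k`. -/
def mutB {n : ℕ} (k : Fin n) (B : Matrix (Fin n) (Fin n) ℝ) : Matrix (Fin n) (Fin n) ℝ :=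
  (Jmat k + colSel k (pPart (-B))) * B * (Jmat k + rowSel k (pPart B))

/-- One step of the simultaneous `(B, C, G)` recursion, mutating at direction `k`. -/
def CGstep {n : ℕ} (B0 : Matrix (Fin n) (Fin n) ℝ)
    (p : Matrix (Fin n) (Fin n) ℝ × Matrix (Fin n) (Fin n) ℝ × Matrix (Fin n) (Fin n) ℝ)
    (k : Fin n) :
    Matrix (Fin n) (Fin n) ℝ × Matrix (Fin n) (Fin n) ℝ × Matrix (Fin n) (Fin n) ℝ :=
  (mutB k p.1,
   p.2.1 * Jmat k + p.2.1 * rowSel k (pPart p.1) + colSel k (pPart (-p.2.1)) * p.1,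
   p.2.2 * Jmat k + p.2.2 * colSel k (pPart (-p.1)) - B0 * colSel k (pPart (-p.2.1)))

def CGmat {n : ℕ} (B : Matrix (Fin n) (Fin n) ℝ) (w : List (Fin n)) :
    Matrix (Fin n) (Fin n) ℝ × Matrix (Fin n) (Fin n) ℝ × Matrix (Fin n) (Fin n) ℝ :=
  w.foldl (CGstep B) (B, 1, 1)

/-- The exchange matrix `B^w`. -/
def Bmat {n : ℕ} (B : Matrix (Fin n) (Fin n) ℝ) (w : List (Fin n)) : Matrix (Fin n) (Fin n) ℝ :=
  (CGmat B w).1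

/-- The `C`-matrix `C^w`. -/
def Cmat {n : ℕ} (B : Matrix (Fin n) (Fin n) ℝ) (w : List (Fin n)) : Matrix (Fin n) (Fin n) ℝ :=
  (CGmat B w).2.1

/-- The `G`-matrix `G^w`. -/
def Gmat {n : ℕ} (B : Matrix (Fin n) (Fin n) ℝ) (w : List (Fin n)) : Matrix (Fin n) (Fin n) ℝ :=
  (CGmat B w).2.2

/-- A sequence is reduced if consecutive entries differ. -/
def ReducedSeq {n : ℕ} (w : List (Fin n)) : Prop := w.Chain' (· ≠ ·)

def SkewSymmetrizable {n : ℕ} (B : Matrix (Fin n) (Fin n) ℝ) : Prop :=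
  ∃ d : Fin n → ℝ, (∀ i, 0 < d i) ∧ (Matrix.diagonal d * B)ᵀ = -(Matrix.diagonal d * B)

def cyclicPattern : Mat3 := !![0,-1,1; 1,0,-1; -1,1,0]

/-- A rank-3 exchange matrix is cyclic if its sign pattern is `± cyclicPattern`. -/
def IsCyclic3 (B : Mat3) : Prop :=
  (∀ i j, Real.sign (B i j) = cyclicPattern i j) ∨
  (∀ i j, Real.sign (B i j) = - cyclicPattern i j)

/-- `B` is cluster-cyclic if every iterated mutation along a reduced sequence is cyclic. -/
def ClusterCyclic (B : Mat3) : Prop :=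
  ∀ w : List (Fin 3), ReducedSeq w → IsCyclic3 (Bmat B w)

/-- `ε` is a family of tropical signs for the (sign-coherent) `C`-pattern of `B`. -/
def IsTropSigns (B : Mat3) (ε : List (Fin 3) → Fin 3 → ℝ) : Prop :=
  ∀ w : List (Fin 3), ReducedSeq w → ∀ i : Fin 3,
    (ε w i = 1 ∨ ε w i = -1) ∧ ∀ j, 0 ≤ ε w i * Cmat B w j i

/-!
If the last mutation in a reduced `w` is not at `k`, then `|b_kj| |b_jk| ≥ 4`. Otherwise,
mutating alternately at `k` and `j` keeps every matrix cyclic, so the entries `|b_jl|` stay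
positive, while after each pair of mutations they satisfy
`y (n + 2) + y n = (|b_kj| |b_jk| - 2) y (n + 1)`, and such a recurrence with coefficient below
`2` has no positive solution.

Sign-coherence is proved by induction along `w`, together with the estimate
`|c_x| ≤ |b_mx| / 2 * |c_m|` for columns of opposite signs `ε_x = -ε_m` with `ε_m b_mx > 0`,
where `m` is not the last direction. Mutating at `k` changes, besides `c_k ↦ -c_k`, only the
column `j` with `ε_k b_kj > 0`, into `c_j + |b_kj| c_k`; the estimate for `(k, j)` makes it take
the sign of `c_k` even when `c_j` has the opposite one, and `|b_kj| |b_jk| ≥ 4` yields the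
estimate for the new pair `(j, k)`.
-/

section MatrixEntries

variable {n : ℕ} {k : Fin n}

theorem mul_Jmat_apply (A : Matrix (Fin n) (Fin n) ℝ) (x y : Fin n) :
    (A * Jmat k) x y = A x y * if y = k then -1 else 1 := by
  rw [Jmat, mul_diagonal]

theorem Jmat_mul_apply (A : Matrix (Fin n) (Fin n) ℝ) (x y : Fin n) :
    (Jmat k * A) x y = (if x = k then -1 else 1) * A x y := by
  rw [Jmat, diagonal_mul]

theorem mul_rowSel_apply (A P : Matrix (Fin n) (Fin n) ℝ) (x y : Fin n) :
    (A * rowSel k P) x y = A x k * P k y := by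
  simp [mul_apply, rowSel]

theorem colSel_mul_apply (A P : Matrix (Fin n) (Fin n) ℝ) (x y : Fin n) :
    (colSel k P * A) x y = P x k * A k y := by
  simp [mul_apply, colSel]

variable {B : Matrix (Fin n) (Fin n) ℝ}

theorem mutB_apply_self_left (hB : B k k = 0) {y : Fin n} (hy : y ≠ k) :
    mutB k B k y = -B k y := by
  simp [mutB, add_mul, mul_add, mul_Jmat_apply, Jmat_mul_apply, mul_rowSel_apply,
    colSel_mul_apply, pPart, hB, hy]

theorem mutB_apply_self_right (hB : B k k = 0) {x : Fin n} (hx : x ≠ k) :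
    mutB k B x k = -B x k := by
  simp [mutB, add_mul, mul_add, mul_Jmat_apply, Jmat_mul_apply, mul_rowSel_apply,
    colSel_mul_apply, pPart, hB, hx]

theorem mutB_apply_of_ne (hB : B k k = 0) {x y : Fin n} (hx : x ≠ k) (hy : y ≠ k) :
    mutB k B x y = B x y + max (-B x k) 0 * B k y + B x k * max (B k y) 0 := by
  simp [mutB, add_mul, mul_add, mul_Jmat_apply, Jmat_mul_apply, mul_rowSel_apply,
    colSel_mul_apply, pPart, hB, hx, hy]

end MatrixEntries

section Recursion

variable {n : ℕ} (B : Matrix (Fin n) (Fin n) ℝ) (w : List (Fin n)) (k : Fin n)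

theorem Cmat_nil : Cmat B [] = 1 := rfl

theorem CGmat_append_singleton : CGmat B (w ++ [k]) = CGstep B (CGmat B w) k := by
  simp [CGmat, List.foldl_append]

theorem Bmat_append_singleton : Bmat B (w ++ [k]) = mutB k (Bmat B w) := by
  rw [Bmat, CGmat_append_singleton]; rfl

theorem Cmat_append_singleton_apply (r x : Fin n) :
    Cmat B (w ++ [k]) r x = Cmat B w r x * (if x = k then -1 else 1) +
      Cmat B w r k * max (Bmat B w k x) 0 + max (-Cmat B w r k) 0 * Bmat B w k x := by
  simp [Cmat, Bmat, CGmat_append_singleton, CGstep, mul_Jmat_apply, mul_rowSel_apply,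
    colSel_mul_apply, pPart]

end Recursion

theorem reducedSeq_append_singleton {n : ℕ} {w : List (Fin n)} {k : Fin n} :
    ReducedSeq (w ++ [k]) ↔ ReducedSeq w ∧ w.getLast? ≠ some k := by
  refine List.isChain_append.trans ?_
  simp only [List.isChain_singleton, List.head?_cons, Option.mem_def, Option.some.injEq,
    forall_eq', true_and]
  exact and_congr_right fun _ => ⟨fun h hk => h k hk rfl, fun h x hx hxk => h (hxk ▸ hx)⟩

theorem Real.sign_eq_one_iff {x : ℝ} : Real.sign x = 1 ↔ 0 < x := by
  refine ⟨fun h => ?_, Real.sign_of_pos⟩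
  rcases lt_trichotomy x 0 with hx | rfl | hx
  · rw [Real.sign_of_neg hx] at h; norm_num at h
  · rw [Real.sign_zero] at h; norm_num at h
  · exact hx

theorem Real.sign_eq_neg_one_iff {x : ℝ} : Real.sign x = -1 ↔ x < 0 := by
  rw [← neg_eq_iff_eq_neg, ← Real.sign_neg, Real.sign_eq_one_iff, neg_pos]

theorem fin_three_exists_ne_ne {k j : Fin 3} (hkj : k ≠ j) : ∃ l, k ≠ l ∧ j ≠ l := by
  revert k j; decide

theorem fin_three_eq_or_eq_or_eq {k j l : Fin 3} (hkj : k ≠ j) (hkl : k ≠ l) (hjl : j ≠ l)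
    (x : Fin 3) : k = x ∨ j = x ∨ l = x := by
  revert k j l x; decide

namespace IsCyclic3

variable {M : Mat3}

theorem apply_self (h : IsCyclic3 M) (x : Fin 3) : M x x = 0 := by
  rw [← Real.sign_eq_zero_iff]
  rcases h with h | h <;> fin_cases x <;> simp [h, cyclicPattern]

theorem apply_ne_zero (h : IsCyclic3 M) {x y : Fin 3} (hxy : x ≠ y) : M x y ≠ 0 := by
  rw [Ne, ← Real.sign_eq_zero_iff]
  revert hxy
  rcases h with h | h <;> fin_cases x <;> fin_cases y <;> simp [h, cyclicPattern]

theorem neg (h : IsCyclic3 M) : IsCyclic3 (-M) := by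
  simp only [IsCyclic3, Matrix.neg_apply, Real.sign_neg, neg_eq_iff_eq_neg, neg_neg]
  exact h.symm

theorem smul (h : IsCyclic3 M) {e : ℝ} (he : e = 1 ∨ e = -1) : IsCyclic3 (e • M) := by
  rcases he with rfl | rfl
  · rwa [one_smul]
  · rw [neg_one_smul]; exact h.neg

theorem signs_of_pos (h : IsCyclic3 M) {a b c : Fin 3} (hab : a ≠ b) (hac : a ≠ c) (hbc : b ≠ c)
    (hpos : 0 < M a b) :
    M b a < 0 ∧ M a c < 0 ∧ 0 < M c a ∧ 0 < M b c ∧ M c b < 0 := by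
  simp only [← Real.sign_eq_one_iff, ← Real.sign_eq_neg_one_iff] at hpos ⊢
  revert hab hac hbc hpos
  rcases h with h | h <;> simp only [h] <;> fin_cases a <;> fin_cases b <;> fin_cases c <;>
    norm_num [cyclicPattern]

theorem signs_of_mul_pos (h : IsCyclic3 M) {e : ℝ} (he : e = 1 ∨ e = -1) {a b c : Fin 3}
    (hab : a ≠ b) (hac : a ≠ c) (hbc : b ≠ c) (hpos : 0 < e * M a b) :
    e * M b a < 0 ∧ e * M a c < 0 ∧ 0 < e * M c a ∧ 0 < e * M b c ∧ e * M c b < 0 := by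
  simpa using (h.smul he).signs_of_pos hab hac hbc (by simpa using hpos)

theorem exists_pos (h : IsCyclic3 M) (k : Fin 3) : ∃ j l, k ≠ j ∧ k ≠ l ∧ j ≠ l ∧ 0 < M k j := by
  obtain ⟨a, b, hka, hkb, hab⟩ : ∃ a b : Fin 3, k ≠ a ∧ k ≠ b ∧ a ≠ b := by revert k; decide
  rcases (h.apply_ne_zero hka).lt_or_gt with hneg | hpos
  · have := (h.neg.signs_of_pos hka hkb hab (by simpa using hneg)).2.1
    exact ⟨b, a, hkb, hka, hab.symm, by simpa using this⟩
  · exact ⟨a, b, hka, hkb, hab, hpos⟩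

theorem abs_mutB_apply_of_ne {k x y : Fin 3} (h : IsCyclic3 M)
    (h' : IsCyclic3 (mutB k M)) (hx : x ≠ k) (hy : y ≠ k) (hxy : x ≠ y) :
    |mutB k M x y| = |M x k| * |M k y| - |M x y| := by
  have hmut := mutB_apply_of_ne (h.apply_self k) hx hy
  have hmut_xk := mutB_apply_self_right (h.apply_self k) hx
  rcases (h.apply_ne_zero hx).lt_or_gt with hxk | hxk
  · obtain ⟨-, hMxy, -, hky, -⟩ := h.neg.signs_of_pos hx hxy hy.symm (by simpa using hxk)
    obtain ⟨-, hMxy', -, -, -⟩ := h'.signs_of_pos hx hxy hy.symm (by linarith)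
    simp only [Matrix.neg_apply, neg_pos, neg_lt_zero] at hMxy hky
    rw [max_eq_left (by linarith), max_eq_right hky.le] at hmut
    rw [abs_of_neg hMxy', abs_of_neg hxk, abs_of_neg hky, abs_of_pos hMxy]
    linarith
  · obtain ⟨-, hMxy, -, hky, -⟩ := h.signs_of_pos hx hxy hy.symm hxk
    obtain ⟨-, hMxy', -, -, -⟩ :=
      h'.neg.signs_of_pos hx hxy hy.symm (by simpa [hmut_xk] using hxk)
    simp only [Matrix.neg_apply, neg_lt_zero] at hMxy'
    rw [max_eq_right (by linarith), max_eq_left hky.le] at hmut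
    rw [abs_of_pos hMxy', abs_of_pos hxk, abs_of_pos hky, abs_of_neg hMxy]
    linarith

end IsCyclic3

theorem exists_nonpos_of_add_eq_mul {a : ℝ} (ha : a < 2) {y : ℕ → ℝ}
    (hy : ∀ n, y (n + 2) + y n = a * y (n + 1)) : ∃ n, y n ≤ 0 := by
  by_contra! hpos
  set z : ℕ → ℝ := fun n => y (n + 1) / y n with hz
  have hstep : ∀ n, z (n + 1) ≤ z n - (2 - a) := by
    intro n
    have h0 := hpos n
    have h1 := hpos (n + 1)
    have hrec : z (n + 1) = a - y n / y (n + 1) := by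
      rw [hz, eq_sub_iff_add_eq, ← add_div, hy, mul_div_cancel_right₀ _ h1.ne']
    have hamgm : 2 ≤ y (n + 1) / y n + y n / y (n + 1) := by
      rw [div_add_div _ _ h0.ne' h1.ne', le_div_iff₀ (by positivity)]
      nlinarith [sq_nonneg (y (n + 1) - y n)]
    rw [hrec]
    linarith
  have hlin : ∀ n : ℕ, z n ≤ z 0 - n * (2 - a) := by
    intro n
    induction n with
    | zero => simp
    | succ n ih => push_cast; linarith [hstep n]
  obtain ⟨n, hn⟩ := exists_nat_gt (z 0 / (2 - a))
  rw [div_lt_iff₀ (by linarith)] at hn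
  linarith [hlin n, div_pos (hpos (n + 1)) (hpos n)]

namespace ClusterCyclic

variable {B : Mat3} {w : List (Fin 3)} {k : Fin 3}

theorem abs_Bmat_append_singleton_self_left (hB : ClusterCyclic B) (hw : ReducedSeq w)
    {y : Fin 3} (hy : y ≠ k) : |Bmat B (w ++ [k]) k y| = |Bmat B w k y| := by
  rw [Bmat_append_singleton, mutB_apply_self_left ((hB w hw).apply_self k) hy, abs_neg]

theorem abs_Bmat_append_singleton_self_right (hB : ClusterCyclic B) (hw : ReducedSeq w)
    {x : Fin 3} (hx : x ≠ k) : |Bmat B (w ++ [k]) x k| = |Bmat B w x k| := by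
  rw [Bmat_append_singleton, mutB_apply_self_right ((hB w hw).apply_self k) hx, abs_neg]

theorem abs_Bmat_append_singleton_of_ne (hB : ClusterCyclic B) (hw : ReducedSeq (w ++ [k]))
    {x y : Fin 3} (hx : x ≠ k) (hy : y ≠ k) (hxy : x ≠ y) :
    |Bmat B (w ++ [k]) x y| = |Bmat B w x k| * |Bmat B w k y| - |Bmat B w x y| := by
  have hcyc' := hB _ hw
  rw [Bmat_append_singleton] at hcyc' ⊢
  exact (hB w (reducedSeq_append_singleton.1 hw).1).abs_mutB_apply_of_ne hcyc' hx hy hxy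

theorem abs_Bmat_append_pair (hB : ClusterCyclic B) (hw : ReducedSeq w)
    (hlast : w.getLast? ≠ some k) {j l : Fin 3} (hkj : k ≠ j) (hkl : k ≠ l) (hjl : j ≠ l) :
    ReducedSeq (w ++ [k] ++ [j]) ∧
      |Bmat B (w ++ [k] ++ [j]) k j| = |Bmat B w k j| ∧
      |Bmat B (w ++ [k] ++ [j]) j k| = |Bmat B w j k| ∧
      |Bmat B (w ++ [k] ++ [j]) j l| = |Bmat B w j k| * |Bmat B w k l| - |Bmat B w j l| ∧
      |Bmat B (w ++ [k] ++ [j]) k l| =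
        |Bmat B w k j| * |Bmat B (w ++ [k] ++ [j]) j l| - |Bmat B w k l| := by
  have hw₁ : ReducedSeq (w ++ [k]) := reducedSeq_append_singleton.2 ⟨hw, hlast⟩
  have hw₂ : ReducedSeq (w ++ [k] ++ [j]) :=
    reducedSeq_append_singleton.2 ⟨hw₁, by simpa using hkj⟩
  have hjl₁ := hB.abs_Bmat_append_singleton_of_ne hw₁ hkj.symm hkl.symm hjl
  rw [hB.abs_Bmat_append_singleton_self_left hw₁ hjl.symm, hjl₁,
    hB.abs_Bmat_append_singleton_of_ne hw₂ hkj hjl.symm hkl,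
    hB.abs_Bmat_append_singleton_self_right hw₁ hkj,
    hB.abs_Bmat_append_singleton_self_left hw₁ hkj,
    hB.abs_Bmat_append_singleton_self_left hw hkj.symm,
    hB.abs_Bmat_append_singleton_self_right hw hkj.symm,
    hB.abs_Bmat_append_singleton_self_left hw hkl.symm]
  exact ⟨hw₂, rfl, rfl, rfl, by rw [hjl₁]⟩

theorem four_le_abs_mul_abs (hB : ClusterCyclic B) (hw : ReducedSeq w)
    (hlast : w.getLast? ≠ some k) {j : Fin 3} (hkj : k ≠ j) :
    4 ≤ |Bmat B w k j| * |Bmat B w j k| := by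
  obtain ⟨l, hkl, hjl⟩ := fin_three_exists_ne_ne hkj
  set u := |Bmat B w k j|
  set v := |Bmat B w j k|
  set W : ℕ → List (Fin 3) := fun n => w ++ (List.replicate n [k, j]).flatten with hW
  have hW_succ : ∀ n, W (n + 1) = W n ++ [k] ++ [j] := by
    simp [hW, List.replicate_succ']
  have hinv : ∀ n, ReducedSeq (W n) ∧ (W n).getLast? ≠ some k ∧
      |Bmat B (W n) k j| = u ∧ |Bmat B (W n) j k| = v := by
    intro n
    induction n with
    | zero =>
      simp only [hW, List.replicate_zero, List.flatten_nil, List.append_nil]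
      exact ⟨hw, hlast, rfl, rfl⟩
    | succ n ih =>
      obtain ⟨hred, hlast, hu, hv⟩ := ih
      obtain ⟨hred', hu', hv', -⟩ := hB.abs_Bmat_append_pair hred hlast hkj hkl hjl
      rw [hW_succ]
      exact ⟨hred', by simpa using hkj.symm, hu'.trans hu, hv'.trans hv⟩
  have hstep := fun n => hB.abs_Bmat_append_pair (hinv n).1 (hinv n).2.1 hkj hkl hjl
  set α : ℕ → ℝ := fun n => |Bmat B (W n) k l|
  set β : ℕ → ℝ := fun n => |Bmat B (W n) j l|
  have hβ : ∀ n, β (n + 1) = v * α n - β n := fun n => by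
    simp only [β, α, hW_succ, (hstep n).2.2.2.1, (hinv n).2.2.2]
  have hα : ∀ n, α (n + 1) = u * β (n + 1) - α n := fun n => by
    simp only [β, α, hW_succ, (hstep n).2.2.2.2, (hinv n).2.2.1]
  by_contra! huv
  obtain ⟨n, hn⟩ := exists_nonpos_of_add_eq_mul (a := u * v - 2) (by linarith) (y := β)
    fun n => by linear_combination hβ (n + 1) + v * hα n + hβ n
  exact hn.not_gt (abs_pos.2 ((hB _ (hinv n).1).apply_ne_zero hjl))

theorem signs_append_singleton_of_pos (hB : ClusterCyclic B) (hw : ReducedSeq (w ++ [k]))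
    {e : ℝ} (he : e = 1 ∨ e = -1) {j l : Fin 3} (hkj : k ≠ j) (hkl : k ≠ l) (hjl : j ≠ l)
    (hpos : 0 < e * Bmat B w k j) :
    e * Bmat B w k l < 0 ∧ 0 < e * Bmat B (w ++ [k]) j k ∧
      4 ≤ e * Bmat B w k j * (e * Bmat B (w ++ [k]) j k) ∧ e * Bmat B (w ++ [k]) j l < 0 ∧
      0 < e * Bmat B (w ++ [k]) l j ∧ e * Bmat B (w ++ [k]) l k < 0 := by
  obtain ⟨hw₀, hlast⟩ := reducedSeq_append_singleton.1 hw
  obtain ⟨hjk, hkl_neg, -, -, -⟩ := (hB w hw₀).signs_of_mul_pos he hkj hkl hjl hpos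
  have hjk' : Bmat B (w ++ [k]) j k = -Bmat B w j k := by
    rw [Bmat_append_singleton, mutB_apply_self_right ((hB w hw₀).apply_self k) hkj.symm]
  have hv : 0 < e * Bmat B (w ++ [k]) j k := by
    rw [hjk']; linarith
  obtain ⟨-, hjl', hlj', -, hlk'⟩ := (hB _ hw).signs_of_mul_pos he hkj.symm hjl hkl hv
  refine ⟨hkl_neg, hv, ?_, hjl', hlj', hlk'⟩
  have he_abs : |e| = 1 := by rcases he with rfl | rfl <;> simp
  rw [← abs_of_pos hpos, ← abs_of_pos hv, abs_mul, abs_mul, he_abs, one_mul, one_mul, hjk',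
    abs_neg]
  exact hB.four_le_abs_mul_abs hw₀ hlast hkj

end ClusterCyclic

section CmatColumns

variable {n : ℕ} {B : Matrix (Fin n) (Fin n) ℝ} {w : List (Fin n)} {k : Fin n}

theorem Cmat_append_singleton_apply_self (hkk : Bmat B w k k = 0) (r : Fin n) :
    Cmat B (w ++ [k]) r k = -Cmat B w r k := by
  simp [Cmat_append_singleton_apply, hkk]

theorem Cmat_append_singleton_apply_of_ne {e : ℝ} (he : e = 1 ∨ e = -1)
    (hk : ∀ r, 0 ≤ e * Cmat B w r k) (r : Fin n) {x : Fin n} (hx : x ≠ k) :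
    Cmat B (w ++ [k]) r x = Cmat B w r x + Cmat B w r k * max (e * Bmat B w k x) 0 := by
  have hr := hk r
  rw [Cmat_append_singleton_apply, if_neg hx, mul_one]
  rcases he with rfl | rfl
  · rw [one_mul] at hr
    rw [max_eq_right (neg_nonpos.2 hr), zero_mul, one_mul, add_zero]
  · rw [neg_one_mul] at hr
    rw [max_eq_left hr, neg_one_mul]
    linear_combination Cmat B w r k * max_zero_sub_max_neg_zero_eq_self (Bmat B w k x)

end CmatColumns

structure CoherentSigns (B : Mat3) (w : List (Fin 3)) (ε : Fin 3 → ℝ) : Prop where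
  eq_one_or_eq_neg_one : ∀ i, ε i = 1 ∨ ε i = -1
  nonneg : ∀ i r, 0 ≤ ε i * Cmat B w r i
  le_half_mul : ∀ m x, w.getLast? ≠ some m → 0 < ε m * Bmat B w m x → ε x = -ε m →
    ∀ r, ε x * Cmat B w r x ≤ ε m * Bmat B w m x / 2 * (ε m * Cmat B w r m)

def mutateSigns (ε : Fin 3 → ℝ) (k j : Fin 3) : Fin 3 → ℝ :=
  Function.update (Function.update ε j (ε k)) k (-ε k)

section MutateSigns

variable {ε : Fin 3 → ℝ} {k j l : Fin 3}

theorem mutateSigns_apply_self : mutateSigns ε k j k = -ε k := by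
  simp [mutateSigns]

theorem mutateSigns_apply_right (hkj : k ≠ j) : mutateSigns ε k j j = ε k := by
  simp [mutateSigns, hkj.symm]

theorem mutateSigns_apply_of_ne (hkl : k ≠ l) (hjl : j ≠ l) : mutateSigns ε k j l = ε l := by
  simp [mutateSigns, hkl.symm, hjl.symm]

theorem mutateSigns_eq_one_or_eq_neg_one (hε : ∀ i, ε i = 1 ∨ ε i = -1) (i : Fin 3) :
    mutateSigns ε k j i = 1 ∨ mutateSigns ε k j i = -1 := by
  simp only [mutateSigns, Function.update_apply]
  split_ifs
  · rcases hε k with h | h <;> simp [h]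
  · exact hε k
  · exact hε i

end MutateSigns

namespace CoherentSigns

variable {B : Mat3} {w : List (Fin 3)} {ε : Fin 3 → ℝ}

theorem nil (B : Mat3) : CoherentSigns B [] fun _ => 1 where
  eq_one_or_eq_neg_one _ := Or.inl rfl
  nonneg i r := by
    rw [one_mul, Cmat_nil, one_apply]
    split_ifs <;> norm_num
  le_half_mul _ _ _ _ h := by norm_num at h

theorem add_half_mul_nonneg (hε : CoherentSigns B w ε) {m x : Fin 3}
    (hm : w.getLast? ≠ some m) (hpos : 0 < ε m * Bmat B w m x) (r : Fin 3) :
    0 ≤ ε m * Cmat B w r x + ε m * Bmat B w m x / 2 * (ε m * Cmat B w r m) := by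
  have hm_nonneg := mul_nonneg (half_pos hpos).le (hε.nonneg m r)
  have hsign : ε x = ε m ∨ ε x = -ε m := by
    rcases hε.eq_one_or_eq_neg_one m with h | h <;>
      rcases hε.eq_one_or_eq_neg_one x with h' | h' <;> norm_num [h, h']
  rcases hsign with h | h
  · have := hε.nonneg x r
    rw [h] at this
    linarith
  · have := hε.le_half_mul m x hm hpos h r
    rw [h] at this
    linarith

theorem columns_append_singleton_of_pos (hB : ClusterCyclic B) {k j l : Fin 3}
    (hw : ReducedSeq (w ++ [k])) (hε : CoherentSigns B w ε)
    (hkj : k ≠ j) (hkl : k ≠ l) (hjl : j ≠ l) (hpos : 0 < ε k * Bmat B w k j) :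
    (∀ r, Cmat B (w ++ [k]) r k = -Cmat B w r k) ∧
      (∀ r, Cmat B (w ++ [k]) r j = Cmat B w r j + Cmat B w r k * (ε k * Bmat B w k j)) ∧
      ∀ r, Cmat B (w ++ [k]) r l = Cmat B w r l := by
  have hεk := hε.eq_one_or_eq_neg_one k
  have hkl_neg := (hB.signs_append_singleton_of_pos hw hεk hkj hkl hjl hpos).1
  refine ⟨Cmat_append_singleton_apply_self
    ((hB w (reducedSeq_append_singleton.1 hw).1).apply_self k), fun r => ?_, fun r => ?_⟩
  · rw [Cmat_append_singleton_apply_of_ne hεk (hε.nonneg k) r hkj.symm, max_eq_left hpos.le]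
  · rw [Cmat_append_singleton_apply_of_ne hεk (hε.nonneg k) r hkl.symm,
      max_eq_right hkl_neg.le, mul_zero, add_zero]

theorem nonneg_append_singleton_of_pos (hB : ClusterCyclic B) {k j l : Fin 3}
    (hw : ReducedSeq (w ++ [k])) (hε : CoherentSigns B w ε)
    (hkj : k ≠ j) (hkl : k ≠ l) (hjl : j ≠ l) (hpos : 0 < ε k * Bmat B w k j) (i r : Fin 3) :
    0 ≤ mutateSigns ε k j i * Cmat B (w ++ [k]) r i := by
  obtain ⟨hck, hcj, hcl⟩ := hε.columns_append_singleton_of_pos hB hw hkj hkl hjl hpos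
  rcases fin_three_eq_or_eq_or_eq hkj hkl hjl i with rfl | rfl | rfl
  · rw [mutateSigns_apply_self, hck]
    linarith [hε.nonneg k r]
  · rw [mutateSigns_apply_right hkj, hcj]
    nlinarith [hε.add_half_mul_nonneg (reducedSeq_append_singleton.1 hw).2 hpos r,
      mul_nonneg hpos.le (hε.nonneg k r)]
  · rw [mutateSigns_apply_of_ne hkl hjl, hcl]
    exact hε.nonneg l r

theorem le_half_mul_append_singleton_of_pos (hB : ClusterCyclic B) {k j l : Fin 3}
    (hw : ReducedSeq (w ++ [k])) (hε : CoherentSigns B w ε)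
    (hkj : k ≠ j) (hkl : k ≠ l) (hjl : j ≠ l) (hpos : 0 < ε k * Bmat B w k j)
    {m x : Fin 3} (hm : (w ++ [k]).getLast? ≠ some m)
    (hmx : 0 < mutateSigns ε k j m * Bmat B (w ++ [k]) m x)
    (hopp : mutateSigns ε k j x = -mutateSigns ε k j m) (r : Fin 3) :
    mutateSigns ε k j x * Cmat B (w ++ [k]) r x ≤
      mutateSigns ε k j m * Bmat B (w ++ [k]) m x / 2 *
        (mutateSigns ε k j m * Cmat B (w ++ [k]) r m) := by
  obtain ⟨-, hv, hfour, hjl', hlj', hlk'⟩ :=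
    hB.signs_append_singleton_of_pos hw (hε.eq_one_or_eq_neg_one k) hkj hkl hjl hpos
  obtain ⟨hck, hcj, -⟩ := hε.columns_append_singleton_of_pos hB hw hkj hkl hjl hpos
  have hxm : x ≠ m := by
    rintro rfl
    rcases mutateSigns_eq_one_or_eq_neg_one hε.eq_one_or_eq_neg_one x with h | h <;>
      rw [h] at hopp <;> norm_num at hopp
  have hkm : k ≠ m := by
    rintro rfl
    simp at hm
  -- only `(m, x) = (j, k)` survives; the other cases contradict the signs of `B^(w ++ [k])`
  rcases fin_three_eq_or_eq_or_eq hkj hkl hjl m with rfl | rfl | rfl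
  · exact absurd rfl hkm
  · rcases fin_three_eq_or_eq_or_eq hkj hkl hjl x with rfl | rfl | rfl
    · rw [mutateSigns_apply_self, mutateSigns_apply_right hkj, hck, hcj]
      nlinarith [mul_nonneg hv.le (hε.add_half_mul_nonneg (reducedSeq_append_singleton.1 hw).2
        hpos r), mul_nonneg (sub_nonneg.2 hfour) (hε.nonneg k r)]
    · exact absurd rfl hxm
    · rw [mutateSigns_apply_right hkj] at hmx
      linarith
  · rw [mutateSigns_apply_of_ne hkl hjl] at hmx hopp
    rcases fin_three_eq_or_eq_or_eq hkj hkl hjl x with rfl | rfl | rfl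
    · rw [mutateSigns_apply_self, neg_inj] at hopp
      rw [← hopp] at hmx
      linarith
    · rw [mutateSigns_apply_right hkj] at hopp
      rw [show ε l = -ε k by linarith] at hmx
      linarith
    · exact absurd rfl hxm

theorem append_singleton_of_pos (hB : ClusterCyclic B) {k j l : Fin 3}
    (hw : ReducedSeq (w ++ [k])) (hε : CoherentSigns B w ε)
    (hkj : k ≠ j) (hkl : k ≠ l) (hjl : j ≠ l) (hpos : 0 < ε k * Bmat B w k j) :
    CoherentSigns B (w ++ [k]) (mutateSigns ε k j) where
  eq_one_or_eq_neg_one := mutateSigns_eq_one_or_eq_neg_one hε.eq_one_or_eq_neg_one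
  nonneg := hε.nonneg_append_singleton_of_pos hB hw hkj hkl hjl hpos
  le_half_mul _ _ hm hmx hopp :=
    hε.le_half_mul_append_singleton_of_pos hB hw hkj hkl hjl hpos hm hmx hopp

theorem exists_append_singleton (hB : ClusterCyclic B) {k : Fin 3} (hw : ReducedSeq (w ++ [k]))
    (hε : CoherentSigns B w ε) : ∃ ε', CoherentSigns B (w ++ [k]) ε' := by
  have hcyc := (hB w (reducedSeq_append_singleton.1 hw).1).smul (hε.eq_one_or_eq_neg_one k)
  obtain ⟨j, l, hkj, hkl, hjl, hpos⟩ := hcyc.exists_pos k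
  exact ⟨_, hε.append_singleton_of_pos hB hw hkj hkl hjl (by simpa using hpos)⟩

theorem exists_of_reducedSeq (hB : ClusterCyclic B) (hw : ReducedSeq w) :
    ∃ ε, CoherentSigns B w ε := by
  induction w using List.reverseRecOn with
  | nil => exact ⟨_, nil B⟩
  | append_singleton w k ih =>
    obtain ⟨ε, hε⟩ := ih (reducedSeq_append_singleton.1 hw).1
    exact hε.exists_append_singleton hB hw

end CoherentSigns

theorem sign_coherence_cluster_cyclic (B : Mat3) (hB : ClusterCyclic B)
    (w : List (Fin 3)) (hw : ReducedSeq w) (i : Fin 3) :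
    (∀ j, 0 ≤ Cmat B w j i) ∨ (∀ j, Cmat B w j i ≤ 0) := by
  obtain ⟨ε, hε⟩ := CoherentSigns.exists_of_reducedSeq hB hw
  rcases hε.eq_one_or_eq_neg_one i with h | h
  · exact Or.inl fun j => by simpa [h] using hε.nonneg i j
  · exact Or.inr fun j => by simpa [h] using hε.nonneg i j
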